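/- arXiv:1903.01620 — 5 statements merged into one kernel-verified Lean document; each statement's English description precedes it below -/
import Mathlib

section
/- Let P and Q be two naive Bayes distributions over a binary class and n binary features with all parameters in (0,1). If P(c | x) = Q(c | x) for all 2ⁿ joint assignments x, then the logistic regression weight vectors obtained from P and Q via the naive-Bayes-to-logistic-regression translation are equal. -/
/-!
The posterior of a naive Bayes model is the sigmoid of its log-odds, and the log-odds is an affine
function of the features whose bias and weights are exactly the translated logistic-regression
weights. The sigmoid is injective, so equal posteriors give two affine functions agreeing on
`{0,1}ⁿ`; evaluating at `0` and at the unit vectors recovers their coefficients.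
-/

open Finset Real

lemma eq_and_eq_of_forall_bool_add_sum_ite {ι M : Type*} [Fintype ι] [DecidableEq ι]
    [AddCancelCommMonoid M] {w₀ v₀ : M} {w v : ι → M}
    (h : ∀ x : ι → Bool,
      w₀ + ∑ i, (if x i then w i else 0) = v₀ + ∑ i, (if x i then v i else 0)) :
    w₀ = v₀ ∧ w = v := by
  have hbias : w₀ = v₀ := by simpa using h fun _ ↦ false
  refine ⟨hbias, funext fun i ↦ ?_⟩
  simpa [hbias] using h fun j ↦ decide (j = i)

lemma sigmoid_log_div {A B : ℝ} (hA : 0 < A) (hB : 0 < B) :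
    sigmoid (log (A / B)) = A / (A + B) := by
  rw [sigmoid_def, exp_neg, exp_log (div_pos hA hB)]
  field_simp

lemma ite_one_sub_pos {a : ℝ} (ha : a ∈ Set.Ioo 0 1) (b : Bool) :
    0 < if b then a else 1 - a := by
  cases b
  · simpa using ha.2
  · exact ha.1

namespace NaiveBayes

variable {ι : Type*} [Fintype ι]

-- `p = P(c)`, `θ i = P(xᵢ | c)` and `θ' i = P(xᵢ | c̄)`.
noncomputable def posterior (p : ℝ) (θ θ' : ι → ℝ) (x : ι → Bool) : ℝ :=
  (p * ∏ i, (if x i then θ i else 1 - θ i)) /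
    (p * ∏ i, (if x i then θ i else 1 - θ i) + (1 - p) * ∏ i, (if x i then θ' i else 1 - θ' i))

noncomputable def bias (p : ℝ) (θ θ' : ι → ℝ) : ℝ :=
  log (p / (1 - p)) + ∑ i, log ((1 - θ i) / (1 - θ' i))

noncomputable def weight (a a' : ℝ) : ℝ :=
  log ((a / a') * ((1 - a') / (1 - a)))

lemma log_ite_div_ite {a a' : ℝ} (ha : a ∈ Set.Ioo 0 1) (ha' : a' ∈ Set.Ioo 0 1) (b : Bool) :
    log ((if b then a else 1 - a) / (if b then a' else 1 - a')) =
      log ((1 - a) / (1 - a')) + if b then weight a a' else 0 := by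
  have h1 : 1 - a ≠ 0 := (sub_pos.2 ha.2).ne'
  have h1' : 1 - a' ≠ 0 := (sub_pos.2 ha'.2).ne'
  cases b
  · simp
  · simp only [if_true, weight]
    rw [← log_mul (by positivity)
      (mul_pos (div_pos ha.1 ha'.1) (div_pos (sub_pos.2 ha'.2) (sub_pos.2 ha.2))).ne']
    congr 1
    field_simp

lemma log_odds_eq_bias_add_sum {p : ℝ} {θ θ' : ι → ℝ} (hp : p ∈ Set.Ioo 0 1)
    (hθ : ∀ i, θ i ∈ Set.Ioo 0 1) (hθ' : ∀ i, θ' i ∈ Set.Ioo 0 1) (x : ι → Bool) :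
    log ((p * ∏ i, (if x i then θ i else 1 - θ i)) /
        ((1 - p) * ∏ i, (if x i then θ' i else 1 - θ' i))) =
      bias p θ θ' + ∑ i, (if x i then weight (θ i) (θ' i) else 0) := by
  have hratio_pos : ∀ i, 0 < (if x i then θ i else 1 - θ i) / (if x i then θ' i else 1 - θ' i) :=
    fun i ↦ div_pos (ite_one_sub_pos (hθ i) _) (ite_one_sub_pos (hθ' i) _)
  rw [mul_div_mul_comm, ← prod_div_distrib,
    log_mul (div_pos hp.1 (sub_pos.2 hp.2)).ne' (prod_pos fun i _ ↦ hratio_pos i).ne',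
    log_prod fun i _ ↦ (hratio_pos i).ne']
  simp only [log_ite_div_ite (hθ _) (hθ' _), sum_add_distrib, bias, add_assoc]

lemma posterior_eq_sigmoid {p : ℝ} {θ θ' : ι → ℝ} (hp : p ∈ Set.Ioo 0 1)
    (hθ : ∀ i, θ i ∈ Set.Ioo 0 1) (hθ' : ∀ i, θ' i ∈ Set.Ioo 0 1) (x : ι → Bool) :
    posterior p θ θ' x = sigmoid (bias p θ θ' + ∑ i, (if x i then weight (θ i) (θ' i) else 0)) := by
  rw [← log_odds_eq_bias_add_sum hp hθ hθ' x, sigmoid_log_div]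
  · rfl
  · exact mul_pos hp.1 (prod_pos fun i _ ↦ ite_one_sub_pos (hθ i) _)
  · exact mul_pos (sub_pos.2 hp.2) (prod_pos fun i _ ↦ ite_one_sub_pos (hθ' i) _)

end NaiveBayes

/-- If two naive Bayes distributions (with all parameters in
`(0,1)`) induce the same posterior `P(c|x) = Q(c|x)` on all `2ⁿ` joint
assignments, then their logistic-regression weight vectors obtained from the
standard naive-Bayes-to-LR translation coincide. -/
theorem conforming_naiveBayes_same_weights
    (n : ℕ) (p q : ℝ) (θc θcb ηc ηcb : Fin n → ℝ)
    (hp : p ∈ Set.Ioo (0 : ℝ) 1) (hq : q ∈ Set.Ioo (0 : ℝ) 1)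
    (hθc : ∀ i, θc i ∈ Set.Ioo (0 : ℝ) 1) (hθcb : ∀ i, θcb i ∈ Set.Ioo (0 : ℝ) 1)
    (hηc : ∀ i, ηc i ∈ Set.Ioo (0 : ℝ) 1) (hηcb : ∀ i, ηcb i ∈ Set.Ioo (0 : ℝ) 1)
    (hagree : ∀ x : Fin n → Bool,
      (p * ∏ i, (if x i then θc i else 1 - θc i)) /
        (p * ∏ i, (if x i then θc i else 1 - θc i)
          + (1 - p) * ∏ i, (if x i then θcb i else 1 - θcb i))
      = (q * ∏ i, (if x i then ηc i else 1 - ηc i)) /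
        (q * ∏ i, (if x i then ηc i else 1 - ηc i)
          + (1 - q) * ∏ i, (if x i then ηcb i else 1 - ηcb i))) :
    (Real.log (p / (1 - p)) + ∑ i, Real.log ((1 - θc i) / (1 - θcb i))
      = Real.log (q / (1 - q)) + ∑ i, Real.log ((1 - ηc i) / (1 - ηcb i))) ∧
    (∀ i, Real.log ((θc i / θcb i) * ((1 - θcb i) / (1 - θc i)))
      = Real.log ((ηc i / ηcb i) * ((1 - ηcb i) / (1 - ηc i)))) := by
  have hlogits : ∀ x : Fin n → Bool,
      NaiveBayes.bias p θc θcb + ∑ i, (if x i then NaiveBayes.weight (θc i) (θcb i) else 0) =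
        NaiveBayes.bias q ηc ηcb + ∑ i, (if x i then NaiveBayes.weight (ηc i) (ηcb i) else 0) :=
      fun x ↦ by
    rw [← sigmoid_inj, ← NaiveBayes.posterior_eq_sigmoid hp hθc hθcb,
      ← NaiveBayes.posterior_eq_sigmoid hq hηc hηcb]
    exact hagree x
  obtain ⟨hbias, hweights⟩ := eq_and_eq_of_forall_bool_add_sum_ite hlogits
  exact ⟨hbias, congrFun hweights⟩
end

section
/- Given a logistic regression model with weights (w₀, …, wₙ) ∈ ℝ^{n+1} over n binary features, and any vector θ ∈ (0,1)ⁿ, there exists a unique naive Bayes distribution P (with all parameters in (0,1)) such that P(c | x) = σ(w₀ + Σᵢ wᵢ xᵢ) for all x ∈ {0,1}ⁿ and P(xᵢ = 1 | c) = θᵢ for all i. Its remaining parameters are P(xᵢ = 1 | c̄) = 1/(1 + e^{wᵢ}(1-θᵢ)/θᵢ) and P(c) = σ(w₀ - Σᵢ log(P(x̄ᵢ|c)/P(x̄ᵢ|c̄))). -/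
open Finset

noncomputable def sigmoid (t : ℝ) : ℝ := 1 / (1 + Real.exp (-t))

/-!
When all parameters lie in `(0,1)`, the posterior `P(c | x)` is
`σ (logit P(c) + ∑ᵢ log (P(xᵢ | c) / P(xᵢ | c̄)))`, and the argument of `σ` is an affine function of
`x ∈ {0,1}ⁿ`. Since `σ` is injective, conformance says that this affine function is
`w₀ + ∑ᵢ wᵢ xᵢ`, and an affine function on the cube determines its coefficients. The coefficient of
`xᵢ` forces `logit θᵢ - logit P(xᵢ = 1 | c̄) = wᵢ`, the constant term forces the value of
`logit P(c)`, and both have exactly one solution in `(0,1)` because `σ : ℝ → (0,1)` is a bijection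
with inverse `logit`.
-/

noncomputable def logit (p : ℝ) : ℝ := Real.log p - Real.log (1 - p)

lemma sigmoid_eq_real_sigmoid : sigmoid = Real.sigmoid := funext fun _ => one_div _

lemma sigmoid_injective : Function.Injective sigmoid :=
  sigmoid_eq_real_sigmoid ▸ Real.sigmoid_injective

lemma sigmoid_mem_Ioo (t : ℝ) : sigmoid t ∈ Set.Ioo 0 1 := by
  rw [sigmoid_eq_real_sigmoid, ← Real.range_sigmoid]
  exact Set.mem_range_self t

lemma logit_sigmoid (t : ℝ) : logit (sigmoid t) = t := by
  have hpos : 0 < Real.sigmoid t := Real.sigmoid_pos t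
  rw [logit, sigmoid_eq_real_sigmoid, ← Real.sigmoid_neg, ← Real.sigmoid_mul_rexp_neg,
    Real.log_mul hpos.ne' (Real.exp_pos _).ne', Real.log_exp]
  ring

lemma sigmoid_logit {p : ℝ} (hp : p ∈ Set.Ioo 0 1) : sigmoid (logit p) = p := by
  rw [← Real.range_sigmoid, ← sigmoid_eq_real_sigmoid] at hp
  obtain ⟨t, rfl⟩ := hp
  rw [logit_sigmoid]

lemma sigmoid_eq_iff {p t : ℝ} (hp : p ∈ Set.Ioo 0 1) : sigmoid t = p ↔ t = logit p := by
  constructor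
  · rintro rfl
    exact (logit_sigmoid t).symm
  · rintro rfl
    exact sigmoid_logit hp

lemma div_add_eq_sigmoid {A B : ℝ} (hA : 0 < A) (hB : 0 < B) :
    A / (A + B) = sigmoid (Real.log A - Real.log B) := by
  rw [sigmoid, neg_sub, Real.exp_sub, Real.exp_log hA, Real.exp_log hB]
  field_simp

lemma sigmoid_logit_sub {θ : ℝ} (hθ : θ ∈ Set.Ioo 0 1) (w : ℝ) :
    sigmoid (logit θ - w) = 1 / (1 + Real.exp w * (1 - θ) / θ) := by
  rw [sigmoid, logit, neg_sub, sub_sub_eq_add_sub, Real.exp_sub, Real.exp_add,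
    Real.exp_log (sub_pos.2 hθ.2), Real.exp_log hθ.1, mul_div_assoc]

lemma logit_sub_logit_eq_iff {θ η w : ℝ} (hθ : θ ∈ Set.Ioo 0 1) (hη : η ∈ Set.Ioo 0 1) :
    logit θ - logit η = w ↔ η = 1 / (1 + Real.exp w * (1 - θ) / θ) := by
  rw [← sigmoid_logit_sub hθ, eq_comm (a := η), sigmoid_eq_iff hη]
  constructor <;> intro h <;> linarith

section BoolCube

variable {ι : Type*} [Fintype ι]

lemma sum_apply_eq_sum_apply_false_add (f : ι → Bool → ℝ) (x : ι → Bool) :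
    ∑ i, f i (x i) =
      ∑ i, f i false + ∑ i, (f i true - f i false) * (if x i then 1 else 0) := by
  rw [← sum_add_distrib]
  refine sum_congr rfl fun i _ => ?_
  cases x i <;> simp

lemma forall_add_sum_eq_add_sum_iff [DecidableEq ι] {a b : ℝ} {u v : ι → ℝ} :
    (∀ x : ι → Bool, a + ∑ i, u i * (if x i then 1 else 0) =
      b + ∑ i, v i * (if x i then 1 else 0)) ↔ a = b ∧ u = v := by
  constructor
  · intro h
    have hab : a = b := by simpa using h fun _ => false
    refine ⟨hab, funext fun j => ?_⟩
    simpa [hab] using h fun i => decide (i = j)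
  · rintro ⟨rfl, rfl⟩ _
    rfl

end BoolCube

section NaiveBayes

variable {ι : Type*} [Fintype ι]

def bernoulliProb (θ : ℝ) (b : Bool) : ℝ := if b then θ else 1 - θ

lemma bernoulliProb_pos {θ : ℝ} (hθ : θ ∈ Set.Ioo 0 1) (b : Bool) : 0 < bernoulliProb θ b := by
  cases b
  · exact sub_pos.2 hθ.2
  · exact hθ.1

/-- `P(c | x)` for the naive Bayes distribution with `P(c) = p`, `P(xᵢ = 1 | c) = θ i` and
`P(xᵢ = 1 | c̄) = η i`. -/
noncomputable def naiveBayesPosterior (p : ℝ) (θ η : ι → ℝ) (x : ι → Bool) : ℝ :=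
  (p * ∏ i, bernoulliProb (θ i) (x i)) /
    (p * ∏ i, bernoulliProb (θ i) (x i) + (1 - p) * ∏ i, bernoulliProb (η i) (x i))

noncomputable def logLikelihoodRatio (θ η : ℝ) (b : Bool) : ℝ :=
  Real.log (bernoulliProb θ b) - Real.log (bernoulliProb η b)

lemma logLikelihoodRatio_false {θ η : ℝ} (hθ : θ ∈ Set.Ioo 0 1) (hη : η ∈ Set.Ioo 0 1) :
    logLikelihoodRatio θ η false = Real.log ((1 - θ) / (1 - η)) :=
  (Real.log_div (sub_pos.2 hθ.2).ne' (sub_pos.2 hη.2).ne').symm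

lemma logLikelihoodRatio_true_sub_false (θ η : ℝ) :
    logLikelihoodRatio θ η true - logLikelihoodRatio θ η false = logit θ - logit η := by
  simp only [logLikelihoodRatio, bernoulliProb, logit, if_true, Bool.false_eq_true, if_false]
  ring

lemma naiveBayesPosterior_eq_sigmoid {p : ℝ} {θ η : ι → ℝ} (hp : p ∈ Set.Ioo 0 1)
    (hθ : ∀ i, θ i ∈ Set.Ioo 0 1) (hη : ∀ i, η i ∈ Set.Ioo 0 1) (x : ι → Bool) :
    naiveBayesPosterior p θ η x =
      sigmoid (logit p + ∑ i, logLikelihoodRatio (θ i) (η i) (x i)) := by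
  have hθx : ∀ i ∈ univ, bernoulliProb (θ i) (x i) ≠ 0 :=
    fun i _ => (bernoulliProb_pos (hθ i) _).ne'
  have hηx : ∀ i ∈ univ, bernoulliProb (η i) (x i) ≠ 0 :=
    fun i _ => (bernoulliProb_pos (hη i) _).ne'
  have h1p : 0 < 1 - p := sub_pos.2 hp.2
  rw [naiveBayesPosterior,
    div_add_eq_sigmoid (mul_pos hp.1 (prod_pos fun i _ => bernoulliProb_pos (hθ i) _))
      (mul_pos h1p (prod_pos fun i _ => bernoulliProb_pos (hη i) _)),
    Real.log_mul hp.1.ne' (prod_ne_zero_iff.2 hθx), Real.log_mul h1p.ne' (prod_ne_zero_iff.2 hηx),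
    Real.log_prod hθx, Real.log_prod hηx, logit]
  simp only [logLikelihoodRatio, sum_sub_distrib]
  congr 1
  ring

lemma forall_naiveBayesPosterior_eq_sigmoid_iff [DecidableEq ι] {p w₀ : ℝ} {θ η w : ι → ℝ}
    (hp : p ∈ Set.Ioo 0 1) (hθ : ∀ i, θ i ∈ Set.Ioo 0 1) (hη : ∀ i, η i ∈ Set.Ioo 0 1) :
    (∀ x : ι → Bool,
        naiveBayesPosterior p θ η x = sigmoid (w₀ + ∑ i, w i * (if x i then 1 else 0))) ↔
      p = sigmoid (w₀ - ∑ i, Real.log ((1 - θ i) / (1 - η i))) ∧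
        η = fun i => 1 / (1 + Real.exp (w i) * (1 - θ i) / θ i) := by
  set r : ι → Bool → ℝ := fun i => logLikelihoodRatio (θ i) (η i)
  have hconf : ∀ x : ι → Bool,
      naiveBayesPosterior p θ η x = sigmoid (w₀ + ∑ i, w i * (if x i then 1 else 0)) ↔
        (logit p + ∑ i, r i false) + ∑ i, (r i true - r i false) * (if x i then 1 else 0) =
          w₀ + ∑ i, w i * (if x i then 1 else 0) := fun x => by
    rw [naiveBayesPosterior_eq_sigmoid hp hθ hη, sigmoid_injective.eq_iff,
      sum_apply_eq_sum_apply_false_add r, add_assoc]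
  simp_rw [forall_congr' hconf, forall_add_sum_eq_add_sum_iff, funext_iff, r,
    logLikelihoodRatio_true_sub_false, logit_sub_logit_eq_iff (hθ _) (hη _),
    logLikelihoodRatio_false (hθ _) (hη _), eq_comm (a := p), sigmoid_eq_iff hp]
  refine and_congr ⟨fun h => ?_, fun h => ?_⟩ Iff.rfl <;> linarith

end NaiveBayes

/-- Given logistic regression weights `(w₀, w) ∈ ℝ^{n+1}` and any
`θ ∈ (0,1)ⁿ`, there is a unique naive Bayes distribution (all parameters in
`(0,1)`) with `P(xᵢ=1|c) = θᵢ` conforming with the logistic regression, i.e.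
`P(c|x) = σ(w₀ + ∑ᵢ wᵢ xᵢ)` for all `x ∈ {0,1}ⁿ`.  Moreover its remaining
parameters are explicitly `P(xᵢ=1|c̄) = 1/(1 + e^{wᵢ}(1-θᵢ)/θᵢ)` and
`P(c) = σ(w₀ - ∑ᵢ log(P(x̄ᵢ|c)/P(x̄ᵢ|c̄)))`. -/
theorem lr_to_naiveBayes_exists_unique
    (n : ℕ) (w₀ : ℝ) (w : Fin n → ℝ) (θ : Fin n → ℝ)
    (hθ : ∀ i, θ i ∈ Set.Ioo (0 : ℝ) 1) :
    (∃! q : ℝ × (Fin n → ℝ),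
      (q.1 ∈ Set.Ioo (0 : ℝ) 1 ∧ ∀ i, q.2 i ∈ Set.Ioo (0 : ℝ) 1) ∧
      ∀ x : Fin n → Bool,
        (q.1 * ∏ i, (if x i then θ i else 1 - θ i)) /
          (q.1 * ∏ i, (if x i then θ i else 1 - θ i)
            + (1 - q.1) * ∏ i, (if x i then q.2 i else 1 - q.2 i))
        = sigmoid (w₀ + ∑ i, w i * (if x i then (1 : ℝ) else 0))) ∧
    (let η : Fin n → ℝ := fun i => 1 / (1 + Real.exp (w i) * (1 - θ i) / θ i)
     let prior : ℝ := sigmoid (w₀ - ∑ i, Real.log ((1 - θ i) / (1 - η i)))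
     (prior ∈ Set.Ioo (0 : ℝ) 1 ∧ ∀ i, η i ∈ Set.Ioo (0 : ℝ) 1) ∧
     ∀ x : Fin n → Bool,
       (prior * ∏ i, (if x i then θ i else 1 - θ i)) /
         (prior * ∏ i, (if x i then θ i else 1 - θ i)
           + (1 - prior) * ∏ i, (if x i then η i else 1 - η i))
       = sigmoid (w₀ + ∑ i, w i * (if x i then (1 : ℝ) else 0))) := by
  let η : Fin n → ℝ := fun i => 1 / (1 + Real.exp (w i) * (1 - θ i) / θ i)
  let prior := sigmoid (w₀ - ∑ i, Real.log ((1 - θ i) / (1 - η i)))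
  have hη : ∀ i, η i ∈ Set.Ioo 0 1 := fun i => by
    simpa only [η, ← sigmoid_logit_sub (hθ i)] using sigmoid_mem_Ioo _
  have hprior : prior ∈ Set.Ioo 0 1 := sigmoid_mem_Ioo _
  have hconf : ∀ x, naiveBayesPosterior prior θ η x =
      sigmoid (w₀ + ∑ i, w i * (if x i then 1 else 0)) :=
    (forall_naiveBayesPosterior_eq_sigmoid_iff hprior hθ hη).2 ⟨rfl, rfl⟩
  refine ⟨⟨(prior, η), ⟨⟨hprior, hη⟩, hconf⟩, ?_⟩, ⟨hprior, hη⟩, hconf⟩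
  rintro ⟨p, η'⟩ ⟨⟨hp, hη'⟩, hconf'⟩
  obtain ⟨hp_eq, rfl⟩ := (forall_naiveBayesPosterior_eq_sigmoid_iff hp hθ hη').1 hconf'
  exact Prod.ext hp_eq rfl
end

section
/- If a logistic regression model F with weights w and a naive Bayes distribution P over binary features satisfy P(c | x) = F(x) for all x ∈ {0,1}ⁿ, then for all i ≥ 1: e^{wᵢ} · P(x̄ᵢ|c) · P(xᵢ|c̄) = P(xᵢ|c) · P(x̄ᵢ|c̄), and e^{w₀} · P(c̄) · Πᵢ P(x̄ᵢ|c̄) = P(c) · Πᵢ P(x̄ᵢ|c). -/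
open Finset

/-!
Conformance says that the naive Bayes odds `P(c, x) / P(c̄, x)` equal `exp (w₀ + ∑ wᵢ xᵢ)` at
every `x`. At `x = 0` this is the constraint on `w₀`. Switching on the single feature `i` multiplies
the naive Bayes odds by `(θcᵢ / (1 - θcᵢ)) / (θcbᵢ / (1 - θcbᵢ))` and the logistic odds by `exp wᵢ`;
comparing the two gives the constraint on `wᵢ`.
-/

lemma sigmoid_eq_exp_div (t : ℝ) : sigmoid t = Real.exp t / (Real.exp t + 1) := by
  have := Real.exp_pos t
  rw [sigmoid, Real.exp_neg]
  field_simp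

lemma eq_exp_mul_of_div_add_eq_sigmoid {a b t : ℝ} (hab : a + b ≠ 0)
    (h : a / (a + b) = sigmoid t) : a = Real.exp t * b := by
  have hE : Real.exp t + 1 ≠ 0 := by positivity
  rw [sigmoid_eq_exp_div, div_eq_div_iff hab hE] at h
  linear_combination h

lemma Fintype.prod_apply_update_mul {ι β M : Type*} [Fintype ι] [DecidableEq ι] [CommMonoid M]
    (F : ι → β → M) (x : ι → β) (i : ι) (b : β) :
    (∏ j, F j (Function.update x i b j)) * F i (x i) = F i b * ∏ j, F j (x j) := by
  rw [Fintype.prod_eq_mul_prod_compl i, Fintype.prod_eq_mul_prod_compl i (fun j => F j (x j)),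
    Finset.prod_congr rfl fun j hj => by
      rw [Function.update_of_ne (by simpa using hj)], Function.update_self]
  ac_rfl

section NaiveBayes

variable {ι : Type*} [Fintype ι]

def nbLikelihood (θ : ι → ℝ) (x : ι → Bool) : ℝ :=
  ∏ i, if x i then θ i else 1 - θ i

lemma nbLikelihood_pos {θ : ι → ℝ} (hθ : ∀ i, θ i ∈ Set.Ioo (0 : ℝ) 1) (x : ι → Bool) :
    0 < nbLikelihood θ x :=
  Finset.prod_pos fun i _ => by
    cases x i
    · simpa using (hθ i).2
    · simpa using (hθ i).1

lemma nbLikelihood_false (θ : ι → ℝ) : nbLikelihood θ (fun _ => false) = ∏ i, (1 - θ i) := by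
  simp [nbLikelihood]

lemma nbLikelihood_update_true_mul [DecidableEq ι] (θ : ι → ℝ) {x : ι → Bool} {i : ι}
    (hx : x i = false) :
    nbLikelihood θ (Function.update x i true) * (1 - θ i) = θ i * nbLikelihood θ x := by
  simpa [nbLikelihood, hx] using
    Fintype.prod_apply_update_mul (fun j (b : Bool) => if b then θ j else 1 - θ j) x i true

end NaiveBayes

/-- If a naive Bayes distribution (prior `p`, conditionals `θc`,
`θcb`, all in `(0,1)`) conforms with the logistic regression with weights
`(w₀, w)`, then the monomial constraints of the NaCL geometric program hold:
`e^{wᵢ}·P(x̄ᵢ|c)·P(xᵢ|c̄) = P(xᵢ|c)·P(x̄ᵢ|c̄)` for each `i`, and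
`e^{w₀}·P(c̄)·∏ᵢP(x̄ᵢ|c̄) = P(c)·∏ᵢP(x̄ᵢ|c)`. -/
theorem conformance_implies_monomial_constraints
    (n : ℕ) (w₀ : ℝ) (w : Fin n → ℝ) (p : ℝ) (θc θcb : Fin n → ℝ)
    (hp : p ∈ Set.Ioo (0 : ℝ) 1)
    (hθc : ∀ i, θc i ∈ Set.Ioo (0 : ℝ) 1)
    (hθcb : ∀ i, θcb i ∈ Set.Ioo (0 : ℝ) 1)
    (hconf : ∀ x : Fin n → Bool,
      (p * ∏ i, (if x i then θc i else 1 - θc i)) /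
        (p * ∏ i, (if x i then θc i else 1 - θc i)
          + (1 - p) * ∏ i, (if x i then θcb i else 1 - θcb i))
      = sigmoid (w₀ + ∑ i, w i * (if x i then (1 : ℝ) else 0))) :
    (∀ i, Real.exp (w i) * (1 - θc i) * θcb i = θc i * (1 - θcb i)) ∧
    Real.exp w₀ * (1 - p) * ∏ i, (1 - θcb i) = p * ∏ i, (1 - θc i) := by
  have odds (x : Fin n → Bool) : p * nbLikelihood θc x =
      Real.exp (w₀ + ∑ i, w i * (if x i then (1 : ℝ) else 0)) * ((1 - p) * nbLikelihood θcb x) :=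
    eq_exp_mul_of_div_add_eq_sigmoid (add_pos (mul_pos hp.1 (nbLikelihood_pos hθc x))
      (mul_pos (sub_pos.2 hp.2) (nbLikelihood_pos hθcb x))).ne' (hconf x)
  have odds_zero := odds fun _ => false
  simp only [nbLikelihood_false, Bool.false_eq_true, if_false, mul_zero, sum_const_zero,
    add_zero] at odds_zero
  refine ⟨fun i => ?_, by linear_combination -odds_zero⟩
  have score_i : ∑ j, w j * (if Function.update (fun _ => false) i true j then (1 : ℝ) else 0)
      = w i := by
    simp [Function.update_apply]
  have odds_i := odds (Function.update (fun _ => false) i true)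
  rw [score_i, Real.exp_add] at odds_i
  have hc := nbLikelihood_update_true_mul θc (x := fun _ => false) (i := i) rfl
  have hcb := nbLikelihood_update_true_mul θcb (x := fun _ => false) (i := i) rfl
  rw [nbLikelihood_false] at hc hcb
  have hK : 0 < p * ∏ j, (1 - θc j) :=
    mul_pos hp.1 (prod_pos fun j _ => sub_pos.2 (hθc j).2)
  refine mul_right_cancel₀ hK.ne' ?_
  linear_combination Real.exp (w i) * (1 - θc i) * θcb i * odds_zero
    - Real.exp (w i) * (1 - θc i) * Real.exp w₀ * (1 - p) * hcb
    - (1 - θc i) * (1 - θcb i) * odds_i + (1 - θcb i) * p * hc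
end

section
/- Let P_θ range over a family of joint distributions over features X and class C such that the conditional distribution P_θ(C | x) is the same fixed function for all θ in the family. Let D be a dataset of feature assignments and D′ the completed dataset containing, for each d = x ∈ D and each class value c, the weighted example (x, c) with weight α_c(x) satisfying α_c(x) ≥ 0 and Σ_c α_c(x) = 1. Then the weighted joint log-likelihood on D′ differs from the marginal log-likelihood on D by a constant independent of θ; hence any maximizer of one is a maximizer of the other. -/
open Finset

/-!
Since `∑ c, α x c = 1`, the weighted joint log-likelihood of a point splits as
`∑ c, α x c * log P(x, c) = log P(x) + ∑ c, α x c * log P(c | x)`.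
The second term depends on `θ` only through the conditional `P_θ(c | x)`, which is the same
for every member of the family, so the two objectives differ by a constant and share their
maximizers.
-/

theorem sum_mul_log_sub_log_sum_eq_sum_mul_log_div {ι : Type*} [Fintype ι] {α p : ι → ℝ}
    (hα : ∑ i, α i = 1) (hp : ∀ i, 0 < p i) :
    ∑ i, α i * Real.log (p i) - Real.log (∑ j, p j)
      = ∑ i, α i * Real.log (p i / ∑ j, p j) := by
  have hlog : ∀ i, Real.log (p i / ∑ j, p j) = Real.log (p i) - Real.log (∑ j, p j) := by
    intro i
    have hsum : 0 < ∑ j, p j :=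
      (hp i).trans_le (single_le_sum (fun j _ => (hp j).le) (mem_univ i))
    exact Real.log_div (hp i).ne' hsum.ne'
  simp only [hlog, mul_sub, sum_sub_distrib, ← sum_mul, hα, one_mul]

theorem exists_forall_eq_add_of_forall_sub_eq {Θ G : Type*} [AddCommGroup G] {f g : Θ → G}
    (h : ∀ a b, f a - g a = f b - g b) : ∃ K, ∀ a, f a = g a + K := by
  rcases isEmpty_or_nonempty Θ with _ | ⟨⟨a₀⟩⟩
  · exact ⟨0, fun a => isEmptyElim a⟩
  · exact ⟨f a₀ - g a₀, fun a => sub_eq_iff_eq_add'.mp (h a a₀)⟩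

theorem forall_le_iff_of_forall_eq_add {Θ G : Type*} [AddCommMonoid G] [PartialOrder G]
    [IsOrderedCancelAddMonoid G] {f g : Θ → G} {K : G}
    (h : ∀ a, f a = g a + K) (a₀ : Θ) : (∀ a, f a ≤ f a₀) ↔ (∀ a, g a ≤ g a₀) := by
  simp only [h, add_le_add_iff_right]

theorem conformant_learning_objective_equivalence_general
    {Θ X C : Type*} [Fintype C]
    (P : Θ → X → C → ℝ) (D : Finset X) (α : X → C → ℝ)
    (hpos : ∀ θ c, ∀ x ∈ D, 0 < P θ x c)
    (hα1 : ∀ x, ∑ c, α x c = 1)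
    (hfixed : ∀ θ θ' : Θ, ∀ x ∈ D, ∀ c : C,
      P θ x c / (∑ c', P θ x c') = P θ' x c / (∑ c', P θ' x c')) :
    (∃ K : ℝ, ∀ θ : Θ,
      (∑ x ∈ D, ∑ c, α x c * Real.log (P θ x c))
        = (∑ x ∈ D, Real.log (∑ c, P θ x c)) + K) ∧
    (∀ θmax : Θ,
      (∀ θ, (∑ x ∈ D, ∑ c, α x c * Real.log (P θ x c))
          ≤ ∑ x ∈ D, ∑ c, α x c * Real.log (P θmax x c))
      ↔ (∀ θ, (∑ x ∈ D, Real.log (∑ c, P θ x c))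
          ≤ ∑ x ∈ D, Real.log (∑ c, P θmax x c))) := by
  have hgap : ∀ θ, (∑ x ∈ D, ∑ c, α x c * Real.log (P θ x c))
      - ∑ x ∈ D, Real.log (∑ c, P θ x c)
        = ∑ x ∈ D, ∑ c, α x c * Real.log (P θ x c / ∑ c', P θ x c') := by
    intro θ
    rw [← sum_sub_distrib]
    exact sum_congr rfl fun x hx =>
      sum_mul_log_sub_log_sum_eq_sum_mul_log_div (hα1 x) (hpos θ · x hx)
  obtain ⟨K, hK⟩ := exists_forall_eq_add_of_forall_sub_eq
      (f := fun θ => ∑ x ∈ D, ∑ c, α x c * Real.log (P θ x c))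
      (g := fun θ => ∑ x ∈ D, Real.log (∑ c, P θ x c)) fun θ θ' => by
    rw [hgap, hgap]
    exact sum_congr rfl fun x hx => sum_congr rfl fun c _ => by rw [hfixed θ θ' x hx c]
  exact ⟨⟨K, hK⟩, forall_le_iff_of_forall_eq_add hK⟩

/-- Let `P θ` be a family of joint distributions over features `X`
and class `C` whose conditional `P_θ(c|x)` is the same for all members of the
family (on the dataset).  For a dataset `D` of feature assignments completed
into a weighted dataset with weights `α x c ≥ 0`, `∑ c, α x c = 1`, the
weighted joint log-likelihood and the marginal log-likelihood differ by a
constant independent of `θ`; hence they have the same maximizers. -/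
theorem conformant_learning_objective_equivalence
    {Θ X C : Type*} [Fintype C]
    (P : Θ → X → C → ℝ) (D : Finset X) (α : X → C → ℝ)
    (hpos : ∀ θ c, ∀ x ∈ D, 0 < P θ x c)
    (hα0 : ∀ x c, 0 ≤ α x c) (hα1 : ∀ x, ∑ c, α x c = 1)
    (hfixed : ∀ θ θ' : Θ, ∀ x ∈ D, ∀ c : C,
      P θ x c / (∑ c', P θ x c') = P θ' x c / (∑ c', P θ' x c')) :
    (∃ K : ℝ, ∀ θ : Θ,
      (∑ x ∈ D, ∑ c, α x c * Real.log (P θ x c))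
        = (∑ x ∈ D, Real.log (∑ c, P θ x c)) + K) ∧
    (∀ θmax : Θ,
      (∀ θ, (∑ x ∈ D, ∑ c, α x c * Real.log (P θ x c))
          ≤ ∑ x ∈ D, ∑ c, α x c * Real.log (P θmax x c))
      ↔ (∀ θ, (∑ x ∈ D, Real.log (∑ c, P θ x c))
          ≤ ∑ x ∈ D, Real.log (∑ c, P θmax x c))) :=
  conformant_learning_objective_equivalence_general P D α hpos hα1 hfixed
end

section
/- Let F(x) = σ(w₀ + Σᵢ wᵢ xᵢ) be a binary logistic regression and suppose a naive Bayes distribution P conforms with F. Then for any partial observation y (an assignment to a subset S of features), the expected prediction E_{m∼P(M|y)}[F(y,m)] is computable in closed form as σ(log(P(c)/P(c̄)) + Σ_{i∈S} log(P(yᵢ|c)/P(yᵢ|c̄))), i.e., marginal inference in P computes the expectation of F exactly. -/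
/-!
Conformance says that `F x` is the posterior `A x / (A x + B x)` of the naive Bayes model,
with `A x = p ∏ P(xᵢ|c)` and `B x = (1-p) ∏ P(xᵢ|c̄)`. Weighting by `P(x|y) = (A x + B x) / Z`
cancels the denominator, so the expected prediction is `∑ A / Z = P(c, y) / P(y)`.
Because the class-conditional likelihoods are products of Bernoulli factors, summing over the
unobserved features leaves only the factors on `S`, and the resulting Bayes ratio is the sigmoid
of the log-odds over the observed features.
-/

open Finset

lemma sigmoid_log_div_s16 {a b : ℝ} (ha : 0 < a) (hb : 0 < b) :
    sigmoid (Real.log (a / b)) = a / (a + b) := by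
  rw [sigmoid, ← Real.log_inv, Real.exp_log (by positivity), inv_div]
  field_simp

lemma log_div_add_sum_log_div {ι : Type*} (S : Finset ι) {a₀ b₀ : ℝ} {a b : ι → ℝ}
    (ha₀ : 0 < a₀) (hb₀ : 0 < b₀) (ha : ∀ i ∈ S, 0 < a i) (hb : ∀ i ∈ S, 0 < b i) :
    Real.log (a₀ / b₀) + ∑ i ∈ S, Real.log (a i / b i)
      = Real.log ((a₀ * ∏ i ∈ S, a i) / (b₀ * ∏ i ∈ S, b i)) := by
  rw [mul_div_mul_comm, ← prod_div_distrib,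
    Real.log_mul (div_pos ha₀ hb₀).ne' (prod_pos fun i hi => div_pos (ha i hi) (hb i hi)).ne',
    Real.log_prod fun i hi => (div_pos (ha i hi) (hb i hi)).ne']

lemma sum_div_mul_div_cancel {α : Type*} (s : Finset α) (W A : α → ℝ) (Z : ℝ)
    (hW : ∀ x ∈ s, W x ≠ 0) :
    ∑ x ∈ s, W x / Z * (A x / W x) = (∑ x ∈ s, A x) / Z := by
  rw [sum_div]
  exact sum_congr rfl fun x hx => by field_simp [hW x hx]

theorem sum_filter_eqOn_prod {ι β R : Type*} [Fintype ι] [DecidableEq ι] [Fintype β]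
    [CommSemiring R] (S : Finset ι) (y : ι → β)
    [DecidablePred fun x : ι → β => ∀ i ∈ S, x i = y i] (g : ι → β → R) :
    ∑ x ∈ univ.filter (fun x : ι → β => ∀ i ∈ S, x i = y i), ∏ i, g i (x i)
      = (∏ i ∈ S, g i (y i)) * ∏ i ∈ Sᶜ, ∑ b, g i b := by
  have hfilter : univ.filter (fun x : ι → β => ∀ i ∈ S, x i = y i)
      = Fintype.piFinset fun i => if i ∈ S then {y i} else univ := by
    ext x
    simp only [mem_filter, mem_univ, true_and, Fintype.mem_piFinset]
    refine forall_congr' fun i => ?_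
    split_ifs <;> simp [*]
  rw [hfilter, ← prod_univ_sum, ← prod_mul_prod_compl S]
  congr 1
  · exact prod_congr rfl fun i hi => by simp [hi]
  · exact prod_congr rfl fun i hi => by simp [mem_compl.mp hi]

theorem sum_filter_eqOn_prod_bernoulli {ι : Type*} [Fintype ι] [DecidableEq ι]
    (S : Finset ι) (y : ι → Bool) [DecidablePred fun x : ι → Bool => ∀ i ∈ S, x i = y i]
    (θ : ι → ℝ) :
    ∑ x ∈ univ.filter (fun x : ι → Bool => ∀ i ∈ S, x i = y i),
        ∏ i, (if x i then θ i else 1 - θ i)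
      = ∏ i ∈ S, (if y i then θ i else 1 - θ i) := by
  rw [sum_filter_eqOn_prod S y fun i b => if b then θ i else 1 - θ i]
  simp

lemma bernoulli_pos {θ : ℝ} (hθ : θ ∈ Set.Ioo (0 : ℝ) 1) (b : Bool) :
    0 < if b then θ else 1 - θ := by
  cases b
  · exact sub_pos.mpr hθ.2
  · exact hθ.1

theorem expected_prediction_conformant_closed_form_general
    (n : ℕ) (p : ℝ) (θc θcb : Fin n → ℝ)
    (hp : p ∈ Set.Ioo (0 : ℝ) 1)
    (hθc : ∀ i, θc i ∈ Set.Ioo (0 : ℝ) 1)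
    (hθcb : ∀ i, θcb i ∈ Set.Ioo (0 : ℝ) 1)
    (F : (Fin n → Bool) → ℝ)
    (hconf : ∀ x : Fin n → Bool,
      (p * ∏ i, (if x i then θc i else 1 - θc i)) /
        (p * ∏ i, (if x i then θc i else 1 - θc i)
          + (1 - p) * ∏ i, (if x i then θcb i else 1 - θcb i))
      = F x)
    (S : Finset (Fin n)) (y : Fin n → Bool) :
    (∑ x ∈ Finset.univ.filter (fun x : Fin n → Bool => ∀ i ∈ S, x i = y i),
        ((p * ∏ i, (if x i then θc i else 1 - θc i)
            + (1 - p) * ∏ i, (if x i then θcb i else 1 - θcb i)) /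
          (∑ x' ∈ Finset.univ.filter (fun x' : Fin n → Bool => ∀ i ∈ S, x' i = y i),
            (p * ∏ i, (if x' i then θc i else 1 - θc i)
              + (1 - p) * ∏ i, (if x' i then θcb i else 1 - θcb i))))
          * F x)
    = sigmoid (Real.log (p / (1 - p))
        + ∑ i ∈ S, Real.log ((if y i then θc i else 1 - θc i)
            / (if y i then θcb i else 1 - θcb i))) := by
  have hp₀ : 0 < p := hp.1
  have hp₁ : 0 < 1 - p := sub_pos.mpr hp.2
  have hc := fun i b => bernoulli_pos (hθc i) b
  have hcb := fun i b => bernoulli_pos (hθcb i) b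
  simp only [← hconf]
  rw [sum_div_mul_div_cancel _ _ _ _ fun x _ => (add_pos
      (mul_pos hp₀ (prod_pos fun i _ => hc i (x i)))
      (mul_pos hp₁ (prod_pos fun i _ => hcb i (x i)))).ne']
  rw [sum_add_distrib, ← mul_sum, ← mul_sum,
    sum_filter_eqOn_prod_bernoulli, sum_filter_eqOn_prod_bernoulli]
  rw [log_div_add_sum_log_div S hp₀ hp₁ (fun i _ => hc i (y i)) (fun i _ => hcb i (y i)),
    sigmoid_log_div_s16 (mul_pos hp₀ (prod_pos fun i _ => hc i (y i)))
      (mul_pos hp₁ (prod_pos fun i _ => hcb i (y i)))]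

/-- If a naive Bayes distribution `P` conforms with a logistic
regression `F` (i.e. `P(c|x) = F(x)` on all of `{0,1}ⁿ`), then for any partial
observation `y` on an observed set `S`, the expected prediction
`∑_m P(m|y)·F(y,m)` (sum over completions weighted by their conditional
probability) is given in closed form by marginal inference in `P`:
`σ(log(P(c)/P(c̄)) + ∑_{i∈S} log(P(yᵢ|c)/P(yᵢ|c̄)))`. -/
theorem expected_prediction_conformant_closed_form
    (n : ℕ) (w₀ : ℝ) (w : Fin n → ℝ) (p : ℝ) (θc θcb : Fin n → ℝ)
    (hp : p ∈ Set.Ioo (0 : ℝ) 1)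
    (hθc : ∀ i, θc i ∈ Set.Ioo (0 : ℝ) 1)
    (hθcb : ∀ i, θcb i ∈ Set.Ioo (0 : ℝ) 1)
    (F : (Fin n → Bool) → ℝ)
    (hF : ∀ x, F x = sigmoid (w₀ + ∑ i, w i * (if x i then (1 : ℝ) else 0)))
    (hconf : ∀ x : Fin n → Bool,
      (p * ∏ i, (if x i then θc i else 1 - θc i)) /
        (p * ∏ i, (if x i then θc i else 1 - θc i)
          + (1 - p) * ∏ i, (if x i then θcb i else 1 - θcb i))
      = F x)
    (S : Finset (Fin n)) (y : Fin n → Bool) :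
    (∑ x ∈ Finset.univ.filter (fun x : Fin n → Bool => ∀ i ∈ S, x i = y i),
        ((p * ∏ i, (if x i then θc i else 1 - θc i)
            + (1 - p) * ∏ i, (if x i then θcb i else 1 - θcb i)) /
          (∑ x' ∈ Finset.univ.filter (fun x' : Fin n → Bool => ∀ i ∈ S, x' i = y i),
            (p * ∏ i, (if x' i then θc i else 1 - θc i)
              + (1 - p) * ∏ i, (if x' i then θcb i else 1 - θcb i))))
          * F x)
    = sigmoid (Real.log (p / (1 - p))
        + ∑ i ∈ S, Real.log ((if y i then θc i else 1 - θc i)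
            / (if y i then θcb i else 1 - θcb i))) :=
  expected_prediction_conformant_closed_form_general n p θc θcb hp hθc hθcb F hconf S y
end
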